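/- Define g(γ) = sup over ξ ∈ [0,1] of (H₂((1-γ)·ξ) - H₂(γ·ξ)) for γ ∈ [0,1]. Then g is nonincreasing on [0,1]: for all 0 ≤ γ₁ ≤ γ₂ ≤ 1, g(γ₂) ≤ g(γ₁). -/

import Mathlib

/-!
The inequality holds pointwise in `ξ`. By the symmetry `H₂(γξ) = H₂(1 - γξ)` it says that the
increment of `H₂` over `[(1 - γ₂)ξ, (1 - γ₁)ξ]` is at least its increment over
`[1 - γ₂ξ, 1 - γ₁ξ]`; both intervals have length `(γ₂ - γ₁)ξ` and the first lies to the left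
since `ξ ≤ 1`, so this is the concavity of `H₂`.
-/

/-- The binary entropy `H₂(x) = -x·log₂ x - (1-x)·log₂(1-x)` (with the conventions
`H₂(0) = H₂(1) = 0`, automatic since `Real.logb 2 0 = 0`). -/
noncomputable def binEnt (x : ℝ) : ℝ :=
  -(x * Real.logb 2 x) - (1 - x) * Real.logb 2 (1 - x)

/-- The amplitude damping capacity function
`g(γ) = sup_{ξ ∈ [0,1]} (H₂((1-γ)ξ) - H₂(γξ))`. -/
noncomputable def adCap (γ : ℝ) : ℝ :=
  ⨆ ξ : Set.Icc (0 : ℝ) 1, (binEnt ((1 - γ) * ↑ξ) - binEnt (γ * ↑ξ))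

open Set Real

theorem ConcaveOn.map_add_sub_map_le {𝕜 : Type*} [Field 𝕜] [LinearOrder 𝕜]
    [IsStrictOrderedRing 𝕜] {s : Set 𝕜} {f : 𝕜 → 𝕜} (hf : ConcaveOn 𝕜 s f) {x y d : 𝕜}
    (hx : x ∈ s) (hyd : y + d ∈ s) (hxy : x ≤ y) (hd : 0 ≤ d) :
    f (y + d) - f y ≤ f (x + d) - f x := by
  rcases (add_le_add hxy hd).eq_or_lt with hL | hL
  · obtain ⟨rfl, rfl⟩ : x = y ∧ d = 0 := by constructor <;> linarith
    simp
  -- `x + d` and `y` are the convex combinations of `x` and `y + d` with swapped weights.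
  set t := d / (y + d - x)
  have hL' : 0 < y + d - x := by linarith
  have ht0 : 0 ≤ t := div_nonneg hd hL'.le
  have ht1 : t ≤ 1 := (div_le_one hL').2 (by linarith)
  have hxd : (1 - t) * x + t * (y + d) = x + d := by
    simp only [t]; field_simp; ring
  have hy : t * x + (1 - t) * (y + d) = y := by
    simp only [t]; field_simp; ring
  have h₁ := hf.2 hx hyd (sub_nonneg.2 ht1) ht0 (by ring)
  have h₂ := hf.2 hx hyd ht0 (sub_nonneg.2 ht1) (by ring)
  simp only [smul_eq_mul, hxd, hy] at h₁ h₂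
  linarith

theorem binEnt_eq_binEntropy_div (x : ℝ) : binEnt x = binEntropy x / log 2 := by
  simp only [binEnt, binEntropy, logb, log_inv]
  ring

@[fun_prop]
theorem continuous_binEnt : Continuous binEnt := by
  simp only [funext binEnt_eq_binEntropy_div]
  fun_prop

theorem binEnt_one_sub (x : ℝ) : binEnt (1 - x) = binEnt x := by
  simp only [binEnt_eq_binEntropy_div, binEntropy_one_sub]

theorem concaveOn_binEnt : ConcaveOn ℝ (Icc 0 1) binEnt := by
  simpa only [funext binEnt_eq_binEntropy_div, div_eq_inv_mul, smul_eq_mul] using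
    strictConcave_binEntropy.concaveOn.smul (inv_nonneg.2 (log_nonneg one_le_two))

theorem antitoneOn_binEnt_sub_binEnt {ξ : ℝ} (hξ0 : 0 ≤ ξ) (hξ1 : ξ ≤ 1) :
    AntitoneOn (fun γ => binEnt ((1 - γ) * ξ) - binEnt (γ * ξ)) (Icc 0 1) := by
  rintro γ₁ ⟨hγ₁0, -⟩ γ₂ ⟨-, hγ₂1⟩ h12
  have h := concaveOn_binEnt.map_add_sub_map_le (x := (1 - γ₂) * ξ) (y := 1 - γ₂ * ξ)
    (d := (γ₂ - γ₁) * ξ) ⟨by nlinarith, by nlinarith⟩ ⟨by nlinarith, by nlinarith⟩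
    (by nlinarith) (by nlinarith)
  rw [show 1 - γ₂ * ξ + (γ₂ - γ₁) * ξ = 1 - γ₁ * ξ by ring,
    show (1 - γ₂) * ξ + (γ₂ - γ₁) * ξ = (1 - γ₁) * ξ by ring,
    binEnt_one_sub, binEnt_one_sub] at h
  dsimp only
  linarith

/-- The amplitude damping capacity function `g` is nonincreasing on `[0,1]`:
for all `0 ≤ γ₁ ≤ γ₂ ≤ 1`, `g(γ₂) ≤ g(γ₁)`. -/
theorem adCap_antitone (γ₁ γ₂ : ℝ) (h0 : 0 ≤ γ₁) (h12 : γ₁ ≤ γ₂) (h1 : γ₂ ≤ 1) :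
    adCap γ₂ ≤ adCap γ₁ := by
  have hbdd : BddAbove (range fun ξ : Icc (0 : ℝ) 1 =>
      binEnt ((1 - γ₁) * ξ) - binEnt (γ₁ * ξ)) :=
    (isCompact_range (by fun_prop)).bddAbove
  exact ciSup_mono hbdd fun ξ => antitoneOn_binEnt_sub_binEnt ξ.2.1 ξ.2.2
    ⟨h0, h12.trans h1⟩ ⟨h0.trans h12, h1⟩ h12
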